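/- For every n ≥ 1, all dimensions d_A, d_B ≥ 1, every unit vector ψ ∈ ℂ^{d_A} ⊗ ℂ^{d_B} (realized as ℂ^{d_A·d_B} via the Kronecker product), and all families of Hermitian matrices A_s (s ∈ {0,1}^n, size d_A×d_A) and B_t (t ∈ {1,…,n}, size d_B×d_B) satisfying A_s² = I and B_t² = I, the quantum bias of the corresponding INDEX^n strategy satisfies (1/(n·2^n)) Σ_{s ∈ {0,1}^n} Σ_{t=1}^n (−1)^{s_t} · Re⟨ψ, (A_s ⊗ B_t) ψ⟩ ≤ 1/√n. -/

import Mathlib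

open Matrix BigOperators Finset Kronecker

/-!
Put `v s = (A_s ⊗ 1) ψ` and `w t = (1 ⊗ B_t) ψ`; these are unit vectors and
`⟨ψ, (A_s ⊗ B_t) ψ⟩ = ⟨v s, w t⟩`. The bias sum for a fixed `s` is then `Re ⟨v s, u s⟩` with
`u s = ∑ t (-1)^{s t} w t`, hence at most `‖u s‖`. The sign patterns `s ↦ (-1)^{s t}` are
orthogonal, so `∑ s ‖u s‖² = 2ⁿ ∑ t ‖w t‖² = 2ⁿ n`, and Cauchy–Schwarz over the `2ⁿ` values
of `s` gives `∑ s ‖u s‖ ≤ 2ⁿ √n`.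
-/

open scoped InnerProductSpace

def bitSign (x : ZMod 2) : ℝ := if x = 0 then 1 else -1

lemma bitSign_mul_self (x : ZMod 2) : bitSign x * bitSign x = 1 := by
  unfold bitSign; split_ifs <;> norm_num

lemma bitSign_add_one (x : ZMod 2) : bitSign (x + 1) = -bitSign x := by
  have hx : x + 1 = 0 ↔ ¬x = 0 := by revert x; decide
  unfold bitSign; split_ifs <;> simp_all

section SignPatterns

variable {ι : Type*} [Fintype ι] [DecidableEq ι]

lemma sum_bitSign_mul_bitSign_of_ne {t t' : ι} (h : t ≠ t') :
    ∑ s : ι → ZMod 2, bitSign (s t) * bitSign (s t') = 0 := by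
  set c : ι → ZMod 2 := Pi.single t 1
  have flip : ∀ s : ι → ZMod 2,
      bitSign ((s + c) t) * bitSign ((s + c) t') = -(bitSign (s t) * bitSign (s t')) := by
    intro s
    simp [c, h.symm, bitSign_add_one]
  have shift := Fintype.sum_equiv (Equiv.addRight c)
    (fun s => bitSign ((s + c) t) * bitSign ((s + c) t')) (fun s => bitSign (s t) * bitSign (s t'))
    fun _ => rfl
  simp only [flip, sum_neg_distrib] at shift
  linarith

lemma sum_bitSign_mul_self (t : ι) :
    ∑ s : ι → ZMod 2, bitSign (s t) * bitSign (s t) = 2 ^ Fintype.card ι := by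
  simp [bitSign_mul_self]

end SignPatterns

section SignedSums

variable {𝕜 E ι : Type*} [RCLike 𝕜] [NormedAddCommGroup E] [InnerProductSpace 𝕜 E] [Fintype ι]

lemma re_inner_sum_ofReal_smul (x : E) (a : ι → ℝ) (w : ι → E) :
    RCLike.re ⟪x, ∑ t, (a t : 𝕜) • w t⟫_𝕜 = ∑ t, a t * RCLike.re ⟪x, w t⟫_𝕜 := by
  simp [inner_sum, inner_smul_right]

lemma norm_sum_ofReal_smul_sq (a : ι → ℝ) (w : ι → E) :
    ‖∑ t, (a t : 𝕜) • w t‖ ^ 2 = ∑ t, ∑ t', a t * a t' * RCLike.re ⟪w t, w t'⟫_𝕜 := by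
  rw [← inner_self_eq_norm_sq (𝕜 := 𝕜), sum_inner, map_sum]
  refine sum_congr rfl fun t _ => ?_
  rw [inner_smul_left, RCLike.conj_ofReal, RCLike.re_ofReal_mul, re_inner_sum_ofReal_smul,
    mul_sum]
  simp only [mul_assoc]

variable [DecidableEq ι]

lemma sum_norm_sum_bitSign_smul_sq (w : ι → E) :
    ∑ s : ι → ZMod 2, ‖∑ t, (bitSign (s t) : 𝕜) • w t‖ ^ 2
      = 2 ^ Fintype.card ι * ∑ t, ‖w t‖ ^ 2 := by
  simp only [norm_sum_ofReal_smul_sq]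
  rw [sum_comm, mul_sum]
  refine sum_congr rfl fun t _ => ?_
  rw [sum_comm, Fintype.sum_eq_single t fun t' ht' => ?_]
  · rw [← sum_mul, sum_bitSign_mul_self, inner_self_eq_norm_sq]
  · rw [← sum_mul, sum_bitSign_mul_bitSign_of_ne (Ne.symm ht'), zero_mul]

lemma sum_norm_sum_bitSign_smul_le (w : ι → E) (hw : ∀ t, ‖w t‖ ≤ 1) :
    ∑ s : ι → ZMod 2, ‖∑ t, (bitSign (s t) : 𝕜) • w t‖
      ≤ 2 ^ Fintype.card ι * √(Fintype.card ι) := by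
  have hsq : ∑ s : ι → ZMod 2, ‖∑ t, (bitSign (s t) : 𝕜) • w t‖ ^ 2
      ≤ 2 ^ Fintype.card ι * Fintype.card ι := by
    rw [sum_norm_sum_bitSign_smul_sq]
    gcongr
    calc ∑ t, ‖w t‖ ^ 2 ≤ ∑ _t : ι, (1 : ℝ) :=
          sum_le_sum fun t _ => pow_le_one₀ (norm_nonneg _) (hw t)
      _ = Fintype.card ι := by simp
  refine abs_le_of_sq_le_sq' ?_ (by positivity) |>.2
  calc (∑ s : ι → ZMod 2, ‖∑ t, (bitSign (s t) : 𝕜) • w t‖) ^ 2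
      ≤ 2 ^ Fintype.card ι * ∑ s : ι → ZMod 2, ‖∑ t, (bitSign (s t) : 𝕜) • w t‖ ^ 2 := by
        simpa [Fintype.card_fun] using sq_sum_le_card_mul_sum_sq (s := univ)
          (f := fun s : ι → ZMod 2 => ‖∑ t, (bitSign (s t) : 𝕜) • w t‖)
    _ ≤ 2 ^ Fintype.card ι * (2 ^ Fintype.card ι * Fintype.card ι) := by gcongr
    _ = (2 ^ Fintype.card ι * √(Fintype.card ι)) ^ 2 := by
        rw [mul_pow, Real.sq_sqrt (Nat.cast_nonneg _)]; ring

lemma sum_sum_bitSign_mul_re_inner_le (v : (ι → ZMod 2) → E) (w : ι → E)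
    (hv : ∀ s, ‖v s‖ ≤ 1) (hw : ∀ t, ‖w t‖ ≤ 1) :
    ∑ s : ι → ZMod 2, ∑ t, bitSign (s t) * RCLike.re ⟪v s, w t⟫_𝕜
      ≤ 2 ^ Fintype.card ι * √(Fintype.card ι) := by
  refine le_trans (sum_le_sum fun s _ => ?_) (sum_norm_sum_bitSign_smul_le (𝕜 := 𝕜) w hw)
  calc ∑ t, bitSign (s t) * RCLike.re ⟪v s, w t⟫_𝕜
      = RCLike.re ⟪v s, ∑ t, (bitSign (s t) : 𝕜) • w t⟫_𝕜 :=
        (re_inner_sum_ofReal_smul _ _ _).symm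
    _ ≤ ‖v s‖ * ‖∑ t, (bitSign (s t) : 𝕜) • w t‖ := re_inner_le_norm (𝕜 := 𝕜) _ _
    _ ≤ ‖∑ t, (bitSign (s t) : 𝕜) • w t‖ := mul_le_of_le_one_left (norm_nonneg _) (hv s)

end SignedSums

section MatrixVectors

variable {𝕜 : Type*} [RCLike 𝕜]

lemma inner_toLp_mulVec_toLp_mulVec {k m : Type*} [Fintype k] [Fintype m]
    (M N : Matrix k m 𝕜) (x : m → 𝕜) :
    ⟪WithLp.toLp 2 (M *ᵥ x), WithLp.toLp 2 (N *ᵥ x)⟫_𝕜 = star x ⬝ᵥ ((Mᴴ * N) *ᵥ x) := by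
  rw [EuclideanSpace.inner_toLp_toLp, dotProduct_comm, star_mulVec, ← mulVec_mulVec,
    dotProduct_mulVec, dotProduct_mulVec, dotProduct_mulVec]

variable {l m : Type*} [Fintype l] [Fintype m] [DecidableEq l] [DecidableEq m]

lemma norm_toLp_mulVec_eq_one {U : Matrix m m 𝕜} (hU : Uᴴ * U = 1) {x : m → 𝕜}
    (hx : star x ⬝ᵥ x = 1) : ‖WithLp.toLp 2 (U *ᵥ x)‖ = 1 := by
  rw [norm_eq_sqrt_re_inner (𝕜 := 𝕜), inner_toLp_mulVec_toLp_mulVec, hU, one_mulVec, hx]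
  simp

lemma conjTranspose_mul_self_eq_one_of_isHermitian {A : Matrix m m 𝕜} (hA : A.IsHermitian)
    (hsq : A * A = 1) : Aᴴ * A = 1 := by
  rwa [hA.eq]

lemma conjTranspose_mul_self_kronecker {A : Matrix l l 𝕜} {B : Matrix m m 𝕜}
    (hA : Aᴴ * A = 1) (hB : Bᴴ * B = 1) : (A ⊗ₖ B)ᴴ * (A ⊗ₖ B) = 1 := by
  rw [conjTranspose_kronecker, ← mul_kronecker_mul, hA, hB, one_kronecker_one]

lemma inner_kronecker_one_mulVec_one_kronecker_mulVec {A : Matrix l l 𝕜} (hA : A.IsHermitian)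
    (B : Matrix m m 𝕜) (ψ : l × m → 𝕜) :
    ⟪WithLp.toLp 2 ((A ⊗ₖ (1 : Matrix m m 𝕜)) *ᵥ ψ),
      WithLp.toLp 2 (((1 : Matrix l l 𝕜) ⊗ₖ B) *ᵥ ψ)⟫_𝕜 = star ψ ⬝ᵥ ((A ⊗ₖ B) *ᵥ ψ) := by
  rw [inner_toLp_mulVec_toLp_mulVec, conjTranspose_kronecker, hA.eq, conjTranspose_one,
    ← mul_kronecker_mul, mul_one, one_mul]

end MatrixVectors

theorem index_game_quantum_bias_le_general
    (n dA dB : ℕ)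
    (ψ : Fin dA × Fin dB → ℂ) (hψ : star ψ ⬝ᵥ ψ = 1)
    (A : (Fin n → ZMod 2) → Matrix (Fin dA) (Fin dA) ℂ)
    (B : Fin n → Matrix (Fin dB) (Fin dB) ℂ)
    (hAherm : ∀ s, (A s).IsHermitian) (hAsq : ∀ s, A s * A s = 1)
    (hBherm : ∀ t, (B t).IsHermitian) (hBsq : ∀ t, B t * B t = 1) :
    (1 / (n * 2 ^ n) : ℝ) * ∑ s : Fin n → ZMod 2, ∑ t : Fin n,
      (if s t = 0 then (1 : ℝ) else -1) * (star ψ ⬝ᵥ ((A s ⊗ₖ B t) *ᵥ ψ)).re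
      ≤ 1 / Real.sqrt n := by
  set v : (Fin n → ZMod 2) → EuclideanSpace ℂ (Fin dA × Fin dB) :=
    fun s => WithLp.toLp 2 ((A s ⊗ₖ (1 : Matrix (Fin dB) (Fin dB) ℂ)) *ᵥ ψ)
  set w : Fin n → EuclideanSpace ℂ (Fin dA × Fin dB) :=
    fun t => WithLp.toLp 2 (((1 : Matrix (Fin dA) (Fin dA) ℂ) ⊗ₖ B t) *ᵥ ψ)
  have hv : ∀ s, ‖v s‖ ≤ 1 := fun s => (norm_toLp_mulVec_eq_one
    (conjTranspose_mul_self_kronecker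
      (conjTranspose_mul_self_eq_one_of_isHermitian (hAherm s) (hAsq s)) (by simp)) hψ).le
  have hw : ∀ t, ‖w t‖ ≤ 1 := fun t => (norm_toLp_mulVec_eq_one
    (conjTranspose_mul_self_kronecker (by simp)
      (conjTranspose_mul_self_eq_one_of_isHermitian (hBherm t) (hBsq t))) hψ).le
  have hterm : ∀ s t, (star ψ ⬝ᵥ ((A s ⊗ₖ B t) *ᵥ ψ)).re = RCLike.re ⟪v s, w t⟫_ℂ :=
    fun s t => by rw [inner_kronecker_one_mulVec_one_kronecker_mulVec (hAherm s)]; rfl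
  calc (1 / (n * 2 ^ n) : ℝ) * ∑ s : Fin n → ZMod 2, ∑ t : Fin n,
        (if s t = 0 then (1 : ℝ) else -1) * (star ψ ⬝ᵥ ((A s ⊗ₖ B t) *ᵥ ψ)).re
      = (1 / (n * 2 ^ n) : ℝ) *
          ∑ s : Fin n → ZMod 2, ∑ t, bitSign (s t) * RCLike.re ⟪v s, w t⟫_ℂ := by
        simp only [hterm]; rfl
    _ ≤ (1 / (n * 2 ^ n) : ℝ) * (2 ^ n * √n) := by
        gcongr
        simpa using sum_sum_bitSign_mul_re_inner_le (𝕜 := ℂ) v w hv hw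
    _ = √n / n := by
        rw [one_div_mul_eq_div, mul_comm (n : ℝ), mul_div_mul_left _ _ (by positivity)]
    _ = 1 / Real.sqrt n := Real.sqrt_div_self'

/-- Every quantum strategy for the INDEX game of `n` bits — a shared unit
vector `ψ ∈ ℂ^{dA} ⊗ ℂ^{dB}` together with Hermitian `±1`-observables `A s` and `B t`
squaring to the identity — has bias at most `1/√n`. -/
theorem index_game_quantum_bias_le
    (n dA dB : ℕ) (hn : 1 ≤ n) (hdA : 1 ≤ dA) (hdB : 1 ≤ dB)
    (ψ : Fin dA × Fin dB → ℂ) (hψ : star ψ ⬝ᵥ ψ = 1)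
    (A : (Fin n → ZMod 2) → Matrix (Fin dA) (Fin dA) ℂ)
    (B : Fin n → Matrix (Fin dB) (Fin dB) ℂ)
    (hAherm : ∀ s, (A s).IsHermitian) (hAsq : ∀ s, A s * A s = 1)
    (hBherm : ∀ t, (B t).IsHermitian) (hBsq : ∀ t, B t * B t = 1) :
    (1 / (n * 2 ^ n) : ℝ) * ∑ s : Fin n → ZMod 2, ∑ t : Fin n,
      (if s t = 0 then (1 : ℝ) else -1) * (star ψ ⬝ᵥ ((A s ⊗ₖ B t) *ᵥ ψ)).re
      ≤ 1 / Real.sqrt n :=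
  index_game_quantum_bias_le_general n dA dB ψ hψ A B hAherm hAsq hBherm hBsq
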